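/- arXiv:2206.03704 — 2 statements merged into one kernel-verified Lean document; each statement's English description precedes it below -/
import Mathlib

section
/- If Ind(G) is a quasi-forest and G has no induced 3-cycle and no isolated vertex, then G is a bipartite graph. -/
open Finset

/-- A (finite) simplicial complex on vertex type `V`: a downward-closed
collection of finite subsets of `V`. -/
structure SimplicialComplex (V : Type*) [DecidableEq V] [Fintype V] where
  faces : Finset (Finset V)
  down_closed : ∀ F ∈ faces, ∀ H ⊆ F, H ∈ faces

variable {V : Type*} [DecidableEq V] [Fintype V]

/-- The facets (maximal faces) of a simplicial complex. -/
def SimplicialComplex.facetSet (Δ : SimplicialComplex V) : Finset (Finset V) :=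
  Δ.faces.filter (fun F => ∀ G ∈ Δ.faces, F ⊆ G → F = G)

/-- `F` is a leaf of the collection of facets `𝒞`: either it is the only
member, or there is a branch `M ≠ F` with `N ∩ F ⊆ M ∩ F` for all `N ≠ F`. -/
def IsLeafOf (𝒞 : Finset (Finset V)) (F : Finset V) : Prop :=
  F ∈ 𝒞 ∧ (𝒞 = {F} ∨ ∃ M ∈ 𝒞, M ≠ F ∧ ∀ N ∈ 𝒞, N ≠ F → N ∩ F ⊆ M ∩ F)

/-- A quasi-forest: there is an ordering `F₁, …, F_r` of the facets such that
`Fᵢ` is a leaf of `⟨F₁, …, Fᵢ⟩` for each `i`. -/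
def SimplicialComplex.IsQuasiForest (Δ : SimplicialComplex V) : Prop :=
  ∃ l : List (Finset V), l.Nodup ∧ l.toFinset = Δ.facetSet ∧
    ∀ i (h : i < l.length), IsLeafOf (l.take (i + 1)).toFinset l[i]

/-- A forest: every subcomplex (generated by a nonempty subset of the facets)
has a leaf. -/
def SimplicialComplex.IsForest (Δ : SimplicialComplex V) : Prop :=
  ∀ S ⊆ Δ.facetSet, S.Nonempty → ∃ F, IsLeafOf S F

/-- The simplicial complex generated by a collection of finite sets. -/
def genBy (S : Finset (Finset V)) : SimplicialComplex V where
  faces := Finset.univ.filter (fun F => ∃ G ∈ S, F ⊆ G)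
  down_closed := by
    intro F hF H hH
    simp only [Finset.mem_filter, Finset.mem_univ, true_and] at *
    obtain ⟨G, hG, hFG⟩ := hF
    exact ⟨G, hG, hH.trans hFG⟩

/-- The 1-skeleton of a simplicial complex, as a simple graph. -/
def SimplicialComplex.oneSkeleton (Δ : SimplicialComplex V) : SimpleGraph V where
  Adj a b := a ≠ b ∧ ({a, b} : Finset V) ∈ Δ.faces
  symm := by
    constructor
    intro a b ⟨hab, h⟩
    exact ⟨hab.symm, by rwa [Finset.pair_comm]⟩
  loopless := by constructor; intro a ⟨h, _⟩; exact h rfl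

/-- `G` has an induced cycle of length `k`: an injection `ZMod k → V` whose
image induces exactly the cycle adjacencies. -/
def SimpleGraph.HasInducedCycle {W : Type*} (G : SimpleGraph W) (k : ℕ) : Prop :=
  3 ≤ k ∧ ∃ f : ZMod k → W, Function.Injective f ∧
    ∀ i j : ZMod k, G.Adj (f i) (f j) ↔ (i = j + 1 ∨ j = i + 1)

/-- A simplicial `k`-cycle `S_k` in `Δ`: an induced `k`-cycle in the
1-skeleton such that no facet of `Δ` contains more than two of its vertices. -/
def SimplicialComplex.HasSk (Δ : SimplicialComplex V) (k : ℕ) : Prop :=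
  3 ≤ k ∧ ∃ f : ZMod k → V, Function.Injective f ∧
    (∀ i j : ZMod k, Δ.oneSkeleton.Adj (f i) (f j) ↔ (i = j + 1 ∨ j = i + 1)) ∧
    ∀ F ∈ Δ.facetSet, ∀ i j l : ZMod k,
      f i ∈ F → f j ∈ F → f l ∈ F → (i = j ∨ i = l ∨ j = l)

/-- A simplicial `k`-point `P_k` (for `k ≥ 3`). -/
def SimplicialComplex.HasPkAux (Δ : SimplicialComplex V) (k : ℕ) : Prop :=
  ∃ t : V, ∃ J : Finset V, t ∉ J ∧ J.card = k ∧
    (∀ j ∈ J, insert t (J.erase j) ∈ Δ.faces) ∧ insert t J ∉ Δ.faces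

/-- `Δ` has a simplicial `k`-point; by definition a `P_2` is an `S_3`. -/
def SimplicialComplex.HasPk (Δ : SimplicialComplex V) (k : ℕ) : Prop :=
  if k = 2 then Δ.HasSk 3 else Δ.HasPkAux k

/-- `Δ` is flag: every minimal nonface has exactly two elements. -/
def SimplicialComplex.IsFlag (Δ : SimplicialComplex V) : Prop :=
  ∀ F : Finset V, F ∉ Δ.faces → (∀ H ⊂ F, H ∈ Δ.faces) → F.card = 2

/-- The independence complex of a graph. -/
def indComplex (G : SimpleGraph V) [DecidableRel G.Adj] : SimplicialComplex V where
  faces := Finset.univ.filter (fun F => ∀ a ∈ F, ∀ b ∈ F, ¬ G.Adj a b)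
  down_closed := by
    intro F hF H hH
    simp only [Finset.mem_filter, Finset.mem_univ, true_and] at *
    intro a ha b hb
    exact hF a (hH ha) b (hH hb)

/-!
The 1-skeleton of `Ind(G)` is the complement `Gᶜ`, and the 1-skeleton of a quasi-forest has no
induced cycle of length `k ≥ 4`: if `F` is the last facet of a leaf order, an edge of such a cycle
lying only in `F` also lies in the branch of `F`, because the neighbouring edges of the cycle leave
`F`; so the cycle survives the deletion of `F`, down to the empty complex. If `G` is not bipartite,
a shortest odd closed walk is an induced odd cycle `C_n`. Here `n ≠ 3`, the complement of `C_5`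
is a `C_5`, and for `n ≥ 7` the complement of `C_n` contains an induced `C_4`: both contradict the
chordality of `Gᶜ`.
-/

lemma genBy_oneSkeleton_adj {𝒞 : Finset (Finset V)} {a b : V} :
    (genBy 𝒞).oneSkeleton.Adj a b ↔ a ≠ b ∧ ∃ F ∈ 𝒞, a ∈ F ∧ b ∈ F := by
  simp [SimplicialComplex.oneSkeleton, genBy, insert_subset_iff]

lemma genBy_oneSkeleton_mono {𝒞 𝒟 : Finset (Finset V)} (h : 𝒞 ⊆ 𝒟) :
    (genBy 𝒞).oneSkeleton ≤ (genBy 𝒟).oneSkeleton := by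
  intro a b hab
  rw [genBy_oneSkeleton_adj] at hab ⊢
  obtain ⟨hne, F, hF, ha, hb⟩ := hab
  exact ⟨hne, F, h hF, ha, hb⟩

lemma SimplicialComplex.exists_mem_facetSet_superset (Δ : SimplicialComplex V) {F : Finset V}
    (hF : F ∈ Δ.faces) : ∃ H ∈ Δ.facetSet, F ⊆ H := by
  obtain ⟨H, hFH, hmax⟩ := Δ.faces.exists_le_maximal hF
  exact ⟨H, mem_filter.2 ⟨hmax.prop, fun K hK hHK => le_antisymm hHK (hmax.2 hK hHK)⟩, hFH⟩

lemma SimplicialComplex.genBy_facetSet_faces (Δ : SimplicialComplex V) :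
    (genBy Δ.facetSet).faces = Δ.faces := by
  ext F
  simp only [genBy, mem_filter, mem_univ, true_and]
  constructor
  · rintro ⟨H, hH, hFH⟩
    exact Δ.down_closed H (mem_filter.1 hH).1 F hFH
  · exact Δ.exists_mem_facetSet_superset

lemma SimplicialComplex.oneSkeleton_genBy_facetSet (Δ : SimplicialComplex V) :
    (genBy Δ.facetSet).oneSkeleton = Δ.oneSkeleton := by
  ext a b
  simp only [oneSkeleton, genBy_facetSet_faces]

/-- If the edge `xy` lies only in the leaf `F`, the facets through `xw` and `yz` differ from `F`,
so they push `x` and `y` into the branch of `F`. -/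
lemma IsLeafOf.oneSkeleton_adj_erase {𝒞 : Finset (Finset V)} {F : Finset V}
    (hF : IsLeafOf 𝒞 F) {w x y z : V} (hxy : (genBy 𝒞).oneSkeleton.Adj x y)
    (hxw : (genBy 𝒞).oneSkeleton.Adj x w) (hyz : (genBy 𝒞).oneSkeleton.Adj y z)
    (hwy : ¬ (genBy 𝒞).oneSkeleton.Adj w y) (hwy' : w ≠ y)
    (hxz : ¬ (genBy 𝒞).oneSkeleton.Adj x z) (hxz' : x ≠ z) :
    (genBy (𝒞.erase F)).oneSkeleton.Adj x y := by
  simp only [genBy_oneSkeleton_adj, not_and, not_exists] at *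
  obtain ⟨hne, N, hN, hxN, hyN⟩ := hxy
  refine ⟨hne, ?_⟩
  by_cases hNF : N = F
  swap
  · exact ⟨N, mem_erase.2 ⟨hNF, hN⟩, hxN, hyN⟩
  subst hNF
  obtain ⟨-, K, hK, hxK, hwK⟩ := hxw
  obtain ⟨-, L, hL, hyL, hzL⟩ := hyz
  have hKN : K ≠ N := by rintro rfl; exact hwy hwy' K hK hwK hyN
  have hLN : L ≠ N := by rintro rfl; exact hxz hxz' L hL hxN hzL
  obtain ⟨-, h𝒞 | ⟨M, hM, hMN, hbranch⟩⟩ := hF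
  · exact absurd (by simpa [h𝒞] using hK) hKN
  have hxM := (mem_inter.1 (hbranch K hK hKN (mem_inter.2 ⟨hxK, hxN⟩))).1
  have hyM := (mem_inter.1 (hbranch L hL hLN (mem_inter.2 ⟨hyL, hyN⟩))).1
  exact ⟨M, mem_erase.2 ⟨hMN, hM⟩, hxM, hyM⟩

lemma IsLeafOf.hasInducedCycle_erase {𝒞 : Finset (Finset V)} {F : Finset V} {k : ℕ}
    (hF : IsLeafOf 𝒞 F) (hk : 4 ≤ k) (h : (genBy 𝒞).oneSkeleton.HasInducedCycle k) :
    (genBy (𝒞.erase F)).oneSkeleton.HasInducedCycle k := by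
  obtain ⟨-, f, hf, hadj⟩ := h
  have hne : ∀ m : ℕ, 0 < m → m < k → (m : ZMod k) ≠ 0 := fun m hm hmk h =>
    absurd (Nat.le_of_dvd hm ((ZMod.natCast_eq_zero_iff m k).1 h)) (by omega)
  have h1 := hne 1 (by omega) (by omega)
  have h2 := hne 2 (by omega) (by omega)
  have h3 := hne 3 (by omega) (by omega)
  push_cast at h1 h2 h3
  have hstep : ∀ i, (genBy (𝒞.erase F)).oneSkeleton.Adj (f i) (f (i + 1)) := by
    intro i
    refine hF.oneSkeleton_adj_erase (w := f (i - 1)) (z := f (i + 2))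
      ((hadj _ _).2 (.inr rfl)) ((hadj _ _).2 (.inl (by ring))) ((hadj _ _).2 (.inr (by ring)))
      ?_ (hf.ne ?_) ?_ (hf.ne ?_)
    · rw [hadj]
      rintro (h | h)
      exacts [h3 (by linear_combination -h), h1 (by linear_combination h)]
    · intro h; exact h2 (by linear_combination -h)
    · rw [hadj]
      rintro (h | h)
      exacts [h3 (by linear_combination -h), h1 (by linear_combination h)]
    · intro h; exact h2 (by linear_combination -h)
  refine ⟨by omega, f, hf, fun i j => ⟨fun h => (hadj i j).1 (genBy_oneSkeleton_mono
    (erase_subset F 𝒞) h), ?_⟩⟩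
  rintro (rfl | rfl)
  exacts [(hstep j).symm, hstep i]

lemma not_hasInducedCycle_genBy_of_leafOrder {k : ℕ} (hk : 4 ≤ k) (l : List (Finset V))
    (hnd : l.Nodup) (hleaf : ∀ i (h : i < l.length), IsLeafOf (l.take (i + 1)).toFinset l[i]) :
    ¬ (genBy l.toFinset).oneSkeleton.HasInducedCycle k := by
  induction l using List.reverseRecOn with
  | nil =>
    rintro ⟨-, f, -, hadj⟩
    simpa [genBy_oneSkeleton_adj] using (hadj 1 0).2 (.inl (zero_add 1).symm)
  | append_singleton l F ih =>
    intro h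
    have hF : IsLeafOf (l ++ [F]).toFinset F := by
      have := hleaf l.length (by simp)
      rwa [List.take_of_length_le (by simp), List.getElem_concat_length rfl] at this
    have herase : (l ++ [F]).toFinset.erase F = l.toFinset := by
      have hFl : F ∉ l := fun h => (List.nodup_append.1 hnd).2.2 F h F (by simp) rfl
      simp [List.toFinset_append, erase_insert (List.mem_toFinset.not.2 hFl)]
    refine ih (List.nodup_append.1 hnd).1 ?_ (herase ▸ hF.hasInducedCycle_erase hk h)
    intro i hi
    have := hleaf i (by simp; omega)
    rwa [List.take_append_of_le_length (Nat.succ_le_of_lt hi), List.getElem_append_left hi] at this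

theorem SimplicialComplex.IsQuasiForest.not_hasInducedCycle_oneSkeleton
    {Δ : SimplicialComplex V} (hΔ : Δ.IsQuasiForest) {k : ℕ} (hk : 4 ≤ k) :
    ¬ Δ.oneSkeleton.HasInducedCycle k := by
  obtain ⟨l, hnd, hl, hleaf⟩ := hΔ
  rw [← Δ.oneSkeleton_genBy_facetSet, ← hl]
  exact not_hasInducedCycle_genBy_of_leafOrder hk l hnd hleaf

lemma ZMod.eq_add_one_iff_val {n : ℕ} [Fact (1 < n)] (i j : ZMod n) :
    i = j + 1 ↔ i.val = (j.val + 1) % n := by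
  rw [← (ZMod.val_injective n).eq_iff, ZMod.val_add, ZMod.val_one]

namespace SimpleGraph

variable {α : Type*} {G : SimpleGraph α}

namespace Walk

/-- A repeated vertex would split the walk into two closed walks whose lengths sum to the odd
length, so one of them is odd and shorter. -/
lemma getVert_ne_of_minimal_odd {u : α} (w : G.Walk u u) (hodd : Odd w.length)
    (hmin : ∀ x (p : G.Walk x x), Odd p.length → w.length ≤ p.length) {a b : ℕ}
    (hab : a < b) (hb : b < w.length) : w.getVert a ≠ w.getVert b := by
  intro h
  let inner : G.Walk (w.getVert a) (w.getVert a) :=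
    ((w.drop a).take (b - a)).copy rfl (by rw [drop_getVert, Nat.add_sub_cancel' hab.le, h])
  let outer : G.Walk u u := (w.take a).append ((w.drop b).copy h.symm rfl)
  have hinner : inner.length = b - a := by simp [inner]; omega
  have houter : outer.length = a + (w.length - b) := by simp [outer]; omega
  rcases Nat.even_or_odd (b - a) with he | ho
  · have := hmin u outer <| by
      rw [houter, Nat.odd_iff]; rw [Nat.odd_iff] at hodd; rw [Nat.even_iff] at he; omega
    omega
  · have := hmin _ inner (hinner ▸ ho)
    omega

/-- A chord would split the walk into two closed walks whose lengths sum to the odd length plus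
`2`, so one of them is odd, and it is shorter unless the chord closes up a single step. -/
lemma eq_succ_of_adj_getVert_of_minimal_odd {u : α} (w : G.Walk u u) (hodd : Odd w.length)
    (hmin : ∀ x (p : G.Walk x x), Odd p.length → w.length ≤ p.length) {a b : ℕ}
    (hab : a < b) (hb : b < w.length) (h : G.Adj (w.getVert a) (w.getVert b)) :
    b = a + 1 ∨ (a = 0 ∧ b = w.length - 1) := by
  let inner : G.Walk (w.getVert a) (w.getVert a) :=
    (((w.drop a).take (b - a)).copy rfl
      (by rw [drop_getVert, Nat.add_sub_cancel' hab.le])).concat h.symm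
  let outer : G.Walk u u := (w.take a).append (cons h (w.drop b))
  have hinner : inner.length = b - a + 1 := by simp [inner]; omega
  have houter : outer.length = a + 1 + (w.length - b) := by simp [outer]; omega
  rw [Nat.odd_iff] at hodd
  rcases Nat.even_or_odd (b - a) with he | ho
  · have := hmin _ inner (by rw [hinner, Nat.odd_iff]; rw [Nat.even_iff] at he; omega)
    omega
  · have := hmin u outer (by rw [houter, Nat.odd_iff]; rw [Nat.odd_iff] at ho; omega)
    omega

theorem hasInducedCycle_of_minimal_odd {u : α} (w : G.Walk u u) (hodd : Odd w.length)
    (hmin : ∀ x (p : G.Walk x x), Odd p.length → w.length ≤ p.length) :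
    G.HasInducedCycle w.length := by
  set n := w.length with hn
  have h3 : 3 ≤ n := by
    have h1 : n ≠ 1 := fun h1 => by
      have := w.adj_getVert_succ (i := 0) (by omega)
      rw [getVert_zero, w.getVert_of_length_le (by omega)] at this
      exact G.irrefl this
    obtain ⟨k, hk⟩ := hodd
    omega
  have : Fact (1 < n) := ⟨by omega⟩
  have hstep : ∀ a < n, G.Adj (w.getVert a) (w.getVert ((a + 1) % n)) := by
    intro a ha
    rcases (show a + 1 < n ∨ a + 1 = n by omega) with h | h
    · rw [Nat.mod_eq_of_lt h]
      exact w.adj_getVert_succ ha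
    · rw [h, Nat.mod_self, getVert_zero]
      have := w.adj_getVert_succ ha
      rwa [h, hn, getVert_length] at this
  have hchord : ∀ a b, a < b → b < n → G.Adj (w.getVert a) (w.getVert b) →
      a = (b + 1) % n ∨ b = (a + 1) % n := by
    intro a b hab hb h
    rcases w.eq_succ_of_adj_getVert_of_minimal_odd hodd hmin hab hb h with rfl | ⟨rfl, rfl⟩
    · exact .inr (Nat.mod_eq_of_lt hb).symm
    · exact .inl (by rw [Nat.sub_add_cancel (by omega), Nat.mod_self])
  refine ⟨h3, fun i => w.getVert i.val, fun i j h => ZMod.val_injective n ?_, fun i j => ?_⟩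
  · by_contra hne
    rcases lt_or_gt_of_ne hne with hij | hij
    exacts [w.getVert_ne_of_minimal_odd hodd hmin hij (ZMod.val_lt j) h,
      w.getVert_ne_of_minimal_odd hodd hmin hij (ZMod.val_lt i) h.symm]
  · show G.Adj (w.getVert i.val) (w.getVert j.val) ↔ _
    rw [ZMod.eq_add_one_iff_val, ZMod.eq_add_one_iff_val]
    constructor
    · intro h
      rcases lt_trichotomy i.val j.val with hij | hij | hij
      · exact hchord _ _ hij (ZMod.val_lt j) h
      · exact absurd (hij ▸ h) (G.irrefl)
      · exact (hchord _ _ hij (ZMod.val_lt i) h.symm).symm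
    · rintro (h | h)
      · exact h ▸ (hstep _ (ZMod.val_lt j)).symm
      · exact h ▸ hstep _ (ZMod.val_lt i)

end Walk

theorem exists_odd_hasInducedCycle_of_not_colorable_two (hG : ¬ G.Colorable 2) :
    ∃ n, Odd n ∧ G.HasInducedCycle n := by
  classical
  have hex : ∃ n, ∃ u, ∃ w : G.Walk u u, Odd w.length ∧ w.length = n := by
    simp_rw [two_colorable_iff_forall_loop_even, not_forall, Nat.not_even_iff_odd] at hG
    obtain ⟨u, w, hw⟩ := hG
    exact ⟨_, u, w, hw, rfl⟩
  obtain ⟨u, w, hodd, hlen⟩ := Nat.find_spec hex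
  refine ⟨_, hodd, w.hasInducedCycle_of_minimal_odd hodd fun x p hp => ?_⟩
  exact hlen ▸ Nat.find_min' hex ⟨x, p, hp, rfl⟩

lemma compl_adj_iff_of_adj_iff {n : ℕ} {g : ZMod n → α} (hg : Function.Injective g)
    (hadj : ∀ i j, G.Adj (g i) (g j) ↔ (i = j + 1 ∨ j = i + 1)) (i j : ZMod n) :
    Gᶜ.Adj (g i) (g j) ↔ i ≠ j ∧ ¬ (i = j + 1 ∨ j = i + 1) := by
  rw [compl_adj, hadj, hg.ne_iff]

/-- `i ↦ 2 i` lists the pentagon as `0, 2, 4, 1, 3`, in which consecutive vertices are at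
distance `2`. -/
lemma HasInducedCycle.compl_five (h : G.HasInducedCycle 5) : Gᶜ.HasInducedCycle 5 := by
  obtain ⟨-, g, hg, hadj⟩ := h
  refine ⟨by norm_num, fun i => g (2 * i), hg.comp fun i j h => ?_, fun i j => ?_⟩
  · revert i j; decide
  · rw [compl_adj_iff_of_adj_iff hg hadj]
    revert i j; decide

/-- `i ↦ 3 i % 5` lists `0, 3, 1, 4`: the diagonals `0 1` and `3 4` are edges of the cycle, and
the sides are not, as `n ≥ 6`. -/
lemma HasInducedCycle.compl_four {n : ℕ} (hn : 6 ≤ n) (h : G.HasInducedCycle n) :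
    Gᶜ.HasInducedCycle 4 := by
  obtain ⟨-, g, hg, hadj⟩ := h
  have : Fact (1 < n) := ⟨by omega⟩
  have ha : ∀ i : ZMod 4, 3 * i.val % 5 + 1 < n := fun i => by omega
  have hval : ∀ i : ZMod 4, ((3 * i.val % 5 : ℕ) : ZMod n).val = 3 * i.val % 5 := fun i => by
    rw [ZMod.val_natCast, Nat.mod_eq_of_lt (by have := ha i; omega)]
  refine ⟨by norm_num, fun i => g (3 * i.val % 5 : ℕ), hg.comp fun i j h => ?_, fun i j => ?_⟩
  · have hij := congrArg ZMod.val h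
    rw [hval, hval] at hij
    exact (by decide : ∀ i j : ZMod 4, 3 * i.val % 5 = 3 * j.val % 5 → i = j) i j hij
  · rw [compl_adj_iff_of_adj_iff hg hadj, ← (ZMod.val_injective n).ne_iff,
      ZMod.eq_add_one_iff_val, ZMod.eq_add_one_iff_val, hval, hval, Nat.mod_eq_of_lt (ha i),
      Nat.mod_eq_of_lt (ha j)]
    revert i j
    decide

end SimpleGraph

lemma indComplex_oneSkeleton (G : SimpleGraph V) [DecidableRel G.Adj] :
    (indComplex G).oneSkeleton = Gᶜ := by
  ext a b
  simp only [SimplicialComplex.oneSkeleton, indComplex, mem_filter, mem_univ, true_and,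
    mem_insert, mem_singleton, SimpleGraph.compl_adj]
  constructor
  · rintro ⟨hne, h⟩
    exact ⟨hne, h a (.inl rfl) b (.inr rfl)⟩
  · rintro ⟨hne, h⟩
    refine ⟨hne, ?_⟩
    rintro x (rfl | rfl) y (rfl | rfl)
    exacts [G.irrefl, h, fun h' => h h'.symm, G.irrefl]

theorem stmt1_general {V : Type*} [DecidableEq V] [Fintype V] (G : SimpleGraph V)
    [DecidableRel G.Adj] (hq : (indComplex G).IsQuasiForest)
    (h3 : ¬ G.HasInducedCycle 3) : G.Colorable 2 := by
  by_contra hG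
  obtain ⟨n, hodd, hcyc⟩ := G.exists_odd_hasInducedCycle_of_not_colorable_two hG
  have hchordal : ∀ k, 4 ≤ k → ¬ Gᶜ.HasInducedCycle k := fun k hk =>
    indComplex_oneSkeleton G ▸ hq.not_hasInducedCycle_oneSkeleton hk
  obtain rfl | rfl | hn : n = 3 ∨ n = 5 ∨ 7 ≤ n := by
    obtain ⟨m, rfl⟩ := hodd
    have hn3 := hcyc.1
    omega
  · exact h3 hcyc
  · exact hchordal 5 (by norm_num) hcyc.compl_five
  · exact hchordal 4 le_rfl (hcyc.compl_four (by omega))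

/-- If `Ind(G)` is a quasi-forest and `G` has no induced 3-cycle and no
isolated vertex, then `G` is bipartite (2-colorable). -/
theorem stmt1 {V : Type*} [DecidableEq V] [Fintype V] (G : SimpleGraph V)
    [DecidableRel G.Adj] (hq : (indComplex G).IsQuasiForest)
    (h3 : ¬ G.HasInducedCycle 3) (hiso : ∀ v : V, ∃ u : V, G.Adj v u) :
    G.Colorable 2 :=
  stmt1_general G hq h3
end

section
/- The independence complex Ind(C_k) of the k-cycle graph is a quasi-forest if and only if k = 3 or k = 4. -/
open Finset

variable {V : Type*} [DecidableEq V] [Fintype V]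

/-- The cycle graph on `ZMod k`. -/
def cycleGraph (k : ℕ) : SimpleGraph (ZMod k) where
  Adj i j := i ≠ j ∧ (i = j + 1 ∨ j = i + 1)
  symm := by
    constructor
    intro i j ⟨hij, h⟩
    exact ⟨hij.symm, h.symm⟩
  loopless := by constructor; intro i ⟨h, _⟩; exact h rfl

instance (k : ℕ) : DecidableRel (cycleGraph k).Adj :=
  fun a b => inferInstanceAs (Decidable (a ≠ b ∧ (a = b + 1 ∨ b = a + 1)))

/-!
A leaf `F` of the full facet set of a complex must contain a vertex lying in no other facet:
otherwise every vertex of `F` lies in some `N ≠ F`, hence in the branch `M`, and `F ⊆ M`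
contradicts maximality. In a quasi-forest the last facet of a leaf order is such a leaf.
For `k ≥ 5` no facet of `Ind(C_k)` has a private vertex: given `v ∈ F`, one of `v + 2`, `v + 3`
lies outside `F` since they are adjacent, both are non-adjacent to `v`, and a facet through the
resulting independent pair is a second facet containing `v`. For `k = 3, 4` the facets are
pairwise disjoint (the vertices, resp. the two diagonals), so any order is a leaf order.
-/

namespace SimplicialComplex

variable (Δ : SimplicialComplex V)

lemma mem_facetSet_iff {F : Finset V} :
    F ∈ Δ.facetSet ↔ F ∈ Δ.faces ∧ ∀ G ∈ Δ.faces, F ⊆ G → F = G :=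
  mem_filter

lemma exists_mem_facetSet_superset_s7 {F : Finset V} (hF : F ∈ Δ.faces) :
    ∃ G ∈ Δ.facetSet, F ⊆ G := by
  obtain ⟨G, hG, hmax⟩ :=
    (Δ.faces.filter (F ⊆ ·)).exists_max_image card ⟨F, mem_filter.2 ⟨hF, subset_rfl⟩⟩
  rw [mem_filter] at hG
  refine ⟨G, Δ.mem_facetSet_iff.2 ⟨hG.1, fun G' hG' hGG' => ?_⟩, hG.2⟩
  exact eq_of_subset_of_card_le hGG' (hmax G' (mem_filter.2 ⟨hG', hG.2.trans hGG'⟩))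

variable {Δ}

lemma IsQuasiForest.exists_isLeafOf_facetSet (h : Δ.IsQuasiForest)
    (hne : Δ.facetSet.Nonempty) : ∃ F, IsLeafOf Δ.facetSet F := by
  obtain ⟨l, -, hl, hleaf⟩ := h
  have hlen : 0 < l.length := by
    rw [List.length_pos_iff]
    rintro rfl
    simp [← hl] at hne
  have hlast := hleaf (l.length - 1) (by omega)
  rw [Nat.sub_add_cancel hlen, List.take_length, hl] at hlast
  exact ⟨_, hlast⟩

end SimplicialComplex

lemma IsLeafOf.exists_superset {W : Type*} [DecidableEq W] {𝒞 : Finset (Finset W)}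
    {F : Finset W} (hF : IsLeafOf 𝒞 F) (hne : F.Nonempty)
    (hcover : ∀ v ∈ F, ∃ N ∈ 𝒞, N ≠ F ∧ v ∈ N) :
    ∃ M ∈ 𝒞, M ≠ F ∧ F ⊆ M := by
  obtain ⟨-, rfl | ⟨M, hM, hMF, hbranch⟩⟩ := hF
  · obtain ⟨v, hv⟩ := hne
    obtain ⟨N, hN, hNF, -⟩ := hcover v hv
    exact absurd (mem_singleton.1 hN) hNF
  · refine ⟨M, hM, hMF, fun v hv => ?_⟩
    obtain ⟨N, hN, hNF, hvN⟩ := hcover v hv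
    exact (mem_inter.1 (hbranch N hN hNF (mem_inter.2 ⟨hvN, hv⟩))).1

theorem SimplicialComplex.not_isQuasiForest_of_no_private_vertex {Δ : SimplicialComplex V}
    (hΔ : Δ.facetSet.Nonempty) (hne : ∀ F ∈ Δ.facetSet, F.Nonempty)
    (hcover : ∀ F ∈ Δ.facetSet, ∀ v ∈ F, ∃ N ∈ Δ.facetSet, N ≠ F ∧ v ∈ N) :
    ¬ Δ.IsQuasiForest := fun h => by
  obtain ⟨F, hF⟩ := h.exists_isLeafOf_facetSet hΔ
  obtain ⟨M, hM, hMF, hFM⟩ := hF.exists_superset (hne F hF.1) (hcover F hF.1)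
  exact hMF ((Δ.mem_facetSet_iff.1 hF.1).2 M (Δ.mem_facetSet_iff.1 hM).1 hFM).symm

section indComplex

variable (G : SimpleGraph V) [DecidableRel G.Adj]

lemma mem_indComplex_faces {F : Finset V} :
    F ∈ (indComplex G).faces ↔ ∀ a ∈ F, ∀ b ∈ F, ¬ G.Adj a b := by
  simp [indComplex]

lemma pair_mem_indComplex_faces {v w : V} (hvw : ¬ G.Adj v w) :
    {v, w} ∈ (indComplex G).faces := by
  simp only [mem_indComplex_faces, mem_insert, mem_singleton]
  rintro a (rfl | rfl) b (rfl | rfl)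
  exacts [G.irrefl, hvw, fun h => hvw h.symm, G.irrefl]

lemma indComplex_facetSet_nonempty : (indComplex G).facetSet.Nonempty :=
  let ⟨F, hF, _⟩ := (indComplex G).exists_mem_facetSet_superset_s7
    ((mem_indComplex_faces G (F := ∅)).2 (by simp))
  ⟨F, hF⟩

lemma nonempty_of_mem_indComplex_facetSet [Nonempty V] {F : Finset V}
    (hF : F ∈ (indComplex G).facetSet) : F.Nonempty := by
  rw [nonempty_iff_ne_empty]
  rintro rfl
  obtain ⟨v⟩ := ‹Nonempty V›
  have hv : ({v} : Finset V) ∈ (indComplex G).faces := by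
    simpa using pair_mem_indComplex_faces G (G.irrefl (v := v))
  exact singleton_ne_empty v ((SimplicialComplex.mem_facetSet_iff _).1 hF |>.2 _ hv
    (empty_subset _)).symm

lemma exists_mem_indComplex_facetSet_ne {F : Finset V} {v w : V} (hw : w ∉ F)
    (hvw : ¬ G.Adj v w) :
    ∃ N ∈ (indComplex G).facetSet, N ≠ F ∧ v ∈ N := by
  obtain ⟨N, hN, hvwN⟩ :=
    (indComplex G).exists_mem_facetSet_superset_s7 (pair_mem_indComplex_faces G hvw)
  exact ⟨N, hN, fun h => hw (h ▸ hvwN (by simp)), hvwN (by simp)⟩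

end indComplex

lemma cycleGraph_adj_add_one {k : ℕ} (hk : 2 ≤ k) (v : ZMod k) :
    (cycleGraph k).Adj v (v + 1) := by
  have : Fact (1 < k) := ⟨hk⟩
  exact ⟨left_ne_add.2 one_ne_zero, Or.inr rfl⟩

lemma cycleGraph_not_adj_add_natCast {k n : ℕ} (hn : 2 ≤ n) (hnk : n + 2 ≤ k) (v : ZMod k) :
    ¬ (cycleGraph k).Adj v (v + n) := by
  rintro ⟨-, h | h⟩
  · have h' : ((n + 1 : ℕ) : ZMod k) = ((0 : ℕ) : ZMod k) := by
      push_cast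
      linear_combination -h
    rw [ZMod.natCast_eq_natCast_iff', Nat.mod_eq_of_lt (show n + 1 < k by omega)] at h'
    simp at h'
  · have h' : ((n : ℕ) : ZMod k) = ((1 : ℕ) : ZMod k) := by
      push_cast
      linear_combination h
    rw [ZMod.natCast_eq_natCast_iff', Nat.mod_eq_of_lt (show n < k by omega),
      Nat.mod_eq_of_lt (show 1 < k by omega)] at h'
    omega

lemma cycleGraph_exists_not_mem_not_adj {k : ℕ} [NeZero k] (hk : 5 ≤ k) {F : Finset (ZMod k)}
    (hF : F ∈ (indComplex (cycleGraph k)).faces) (v : ZMod k) :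
    ∃ w ∉ F, ¬ (cycleGraph k).Adj v w := by
  by_cases h2 : v + 2 ∈ F
  · refine ⟨v + 3, fun h3 => (mem_indComplex_faces _).1 hF _ h2 _ h3 ?_, ?_⟩
    · rw [show v + 3 = v + 2 + 1 by ring]
      exact cycleGraph_adj_add_one (by omega) (v + 2)
    · exact_mod_cast cycleGraph_not_adj_add_natCast (n := 3) (by norm_num) (by omega) v
  · refine ⟨v + 2, h2, ?_⟩
    exact_mod_cast cycleGraph_not_adj_add_natCast (n := 2) le_rfl (by omega) v

theorem indComplex_cycleGraph_not_isQuasiForest {k : ℕ} [NeZero k] (hk : 5 ≤ k) :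
    ¬ (indComplex (cycleGraph k)).IsQuasiForest :=
  SimplicialComplex.not_isQuasiForest_of_no_private_vertex (indComplex_facetSet_nonempty _)
    (fun _ => nonempty_of_mem_indComplex_facetSet _) fun _ hF _ _ =>
      let ⟨_, hw, hvw⟩ :=
        cycleGraph_exists_not_mem_not_adj hk ((SimplicialComplex.mem_facetSet_iff _).1 hF).1 _
      exists_mem_indComplex_facetSet_ne _ hw hvw

instance (𝒞 : Finset (Finset V)) (F : Finset V) : Decidable (IsLeafOf 𝒞 F) :=
  by unfold IsLeafOf; infer_instance

lemma indComplex_cycleGraph_three_isQuasiForest : (indComplex (cycleGraph 3)).IsQuasiForest :=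
  ⟨[{0}, {1}, {2}], by decide, by decide, by decide⟩

lemma indComplex_cycleGraph_four_isQuasiForest : (indComplex (cycleGraph 4)).IsQuasiForest :=
  ⟨[{0, 2}, {1, 3}], by decide, by decide, by decide⟩

/-- `Ind(C_k)` is a quasi-forest iff `k = 3` or `k = 4`. -/
theorem stmt7 (k : ℕ) [NeZero k] (hk : 3 ≤ k) :
    (indComplex (cycleGraph k)).IsQuasiForest ↔ k = 3 ∨ k = 4 := by
  refine ⟨fun hqf => ?_, ?_⟩
  · by_contra hk34
    exact indComplex_cycleGraph_not_isQuasiForest (k := k) (by omega) hqf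
  · rintro (rfl | rfl)
    · exact indComplex_cycleGraph_three_isQuasiForest
    · exact indComplex_cycleGraph_four_isQuasiForest
end
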